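/- arXiv:1811.12378 — 10 statements merged into one kernel-verified Lean document; each statement's English description precedes it below -/
import Mathlib

section
/- Let A₁ and A₂ be n×n complex Hermitian matrices such that A₁ + I is positive semidefinite and A₂ is positive semidefinite, and set ρ₂ = ρ(A₂). Let C be the 2n×2n block matrix C = [[0, I], [-(A₁+I), -A₂]]. Then every eigenvalue μ of C satisfies Re(μ) ∈ [-ρ₂, 0]. -/
/-!
An eigenvector `(x, μ x)` of `C` gives `μ² s + μ b + a = 0` with `s = x*x > 0`,
`b = x*A₂x ∈ [0, ρ₂ s]` and `a = x*(A₁+1)x ≥ 0`. A non-real root of this quadratic has real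
part `-b / (2 s) ∈ [-ρ₂/2, 0]`; a real root lies in `[-ρ₂, 0]` because all coefficients are
nonnegative and `b ≤ ρ₂ s`.
-/

open Matrix
open scoped ComplexOrder

/-- The spectral radius of a square complex matrix: the supremum of the moduli
of its eigenvalues. -/
noncomputable def specRad {n : ℕ} (M : Matrix (Fin n) (Fin n) ℂ) : ℝ :=
  sSup ((fun μ => ‖μ‖) '' spectrum ℂ M)

theorem norm_le_specRad {n : ℕ} {M : Matrix (Fin n) (Fin n) ℂ} {μ : ℂ}
    (hμ : μ ∈ spectrum ℂ M) : ‖μ‖ ≤ specRad M :=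
  le_csSup (M.finite_spectrum.image _).bddAbove ⟨μ, hμ, rfl⟩

open scoped MatrixOrder in
theorem Matrix.IsHermitian.dotProduct_mulVec_le_specRad {n : ℕ} {A : Matrix (Fin n) (Fin n) ℂ}
    (hA : A.IsHermitian) (x : Fin n → ℂ) :
    star x ⬝ᵥ A *ᵥ x ≤ (specRad A : ℂ) * (star x ⬝ᵥ x) := by
  have hle : A ≤ algebraMap ℝ _ (specRad A) :=
    (le_algebraMap_iff_spectrum_le hA.isSelfAdjoint).mpr fun ν hν =>
      (le_abs_self ν).trans <| by
        simpa using norm_le_specRad (spectrum.algebraMap_mem ℂ hν)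
  have := (le_iff.mp hle).dotProduct_mulVec_nonneg x
  rw [Algebra.algebraMap_eq_smul_one, sub_mulVec, dotProduct_sub, smul_mulVec, one_mulVec,
    dotProduct_smul, sub_nonneg] at this
  simpa [Complex.real_smul] using this

/-- `fromBlocks 0 1 (-P) (-Q)` linearizes the quadratic eigenvalue problem `(μ² + μ Q + P) x = 0`:
its eigenvectors have the form `(x, μ x)`. -/
theorem Matrix.exists_ne_zero_quadratic_eq_zero_of_mem_spectrum_fromBlocks {K ι : Type*} [Field K]
    [Fintype ι] [DecidableEq ι] {P Q : Matrix ι ι K} {μ : K}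
    (hμ : μ ∈ spectrum K (fromBlocks (0 : Matrix ι ι K) 1 (-P) (-Q))) :
    ∃ x ≠ 0, μ ^ 2 • x + μ • (Q *ᵥ x) + P *ᵥ x = 0 := by
  rw [← spectrum_toLin', ← Module.End.hasEigenvalue_iff_mem_spectrum] at hμ
  obtain ⟨v, hv⟩ := hμ.exists_hasEigenvector
  obtain ⟨x, y, rfl⟩ : ∃ x y, v = Sum.elim x y := ⟨_, _, (Sum.elim_comp_inl_inr v).symm⟩
  have hCv := hv.apply_eq_smul
  rw [toLin'_apply, fromBlocks_mulVec] at hCv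
  have hy : y = μ • x := funext fun i => by simpa using congrFun hCv (Sum.inl i)
  have hQy : -P *ᵥ x + -Q *ᵥ y = μ • y := funext fun i => by simpa using congrFun hCv (Sum.inr i)
  refine ⟨x, fun hx => hv.2 ?_, ?_⟩
  · simp [hy, hx]
  · rw [hy, mulVec_smul, smul_smul, ← pow_two] at hQy
    rw [← hQy, neg_mulVec, neg_mulVec, smul_neg]
    abel

theorem mem_Icc_of_quadratic_eq_zero {s b a ρ t : ℝ} (hs : 0 < s) (ha : 0 ≤ a) (hb : 0 ≤ b)
    (hbρ : b ≤ ρ * s) (h : s * t ^ 2 + b * t + a = 0) : t ∈ Set.Icc (-ρ) 0 := by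
  constructor
  · have hρ : 0 ≤ ρ := nonneg_of_mul_nonneg_left (hb.trans hbρ) hs
    by_contra! ht
    nlinarith [mul_pos hs (mul_pos (show 0 < -t by linarith) (show 0 < -(t + ρ) by linarith)),
      mul_nonneg (sub_nonneg.mpr hbρ) (show 0 ≤ -t by linarith)]
  · by_contra! ht
    nlinarith [mul_pos hs (mul_pos ht ht), mul_nonneg hb ht.le]

theorem re_mem_Icc_of_quadratic_eq_zero {s b a μ : ℂ} {ρ : ℝ} (hs : 0 < s) (ha : 0 ≤ a)
    (hb : 0 ≤ b) (hbρ : b ≤ ρ * s) (h : μ ^ 2 * s + μ * b + a = 0) : μ.re ∈ Set.Icc (-ρ) 0 := by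
  obtain ⟨hs, hs'⟩ := Complex.pos_iff.mp hs
  obtain ⟨ha, ha'⟩ := Complex.nonneg_iff.mp ha
  obtain ⟨hb, hb'⟩ := Complex.nonneg_iff.mp hb
  have hbρ' := (Complex.le_def.mp hbρ).1
  have hre := congrArg Complex.re h
  have him := congrArg Complex.im h
  simp only [pow_two, Complex.add_re, Complex.add_im, Complex.mul_re, Complex.mul_im,
    Complex.zero_re, Complex.zero_im, Complex.ofReal_re, Complex.ofReal_im, ← hs', ← ha', ← hb',
    mul_zero, sub_zero, zero_add, add_zero] at hre him hbρ'
  rcases eq_or_ne μ.im 0 with hq | hq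
  · exact mem_Icc_of_quadratic_eq_zero hs ha hb hbρ' (by rw [hq] at hre; linear_combination hre)
  · have hρ : 0 ≤ ρ := nonneg_of_mul_nonneg_left (hb.trans hbρ') hs
    -- off the real axis, `μ.re` is the vertex `-b / (2 s)` of the parabola
    have hvertex : 2 * μ.re * s.re + b.re = 0 := by
      have : μ.im * (2 * μ.re * s.re + b.re) = 0 := by linear_combination him
      exact (mul_eq_zero.mp this).resolve_left hq
    constructor <;> nlinarith

theorem spectrum_double_size_re_general {n : ℕ} (A₁ A₂ : Matrix (Fin n) (Fin n) ℂ)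
    (hpsd₁ : (A₁ + 1).PosSemidef) (hpsd₂ : A₂.PosSemidef)
    (ρ₂ : ℝ) (hρ₂ : ρ₂ = specRad A₂)
    (C : Matrix (Fin n ⊕ Fin n) (Fin n ⊕ Fin n) ℂ)
    (hC : C = Matrix.fromBlocks 0 1 (-(A₁ + 1)) (-A₂))
    (μ : ℂ) (hμ : μ ∈ spectrum ℂ C) :
    μ.re ∈ Set.Icc (-ρ₂) (0 : ℝ) := by
  subst hρ₂ hC
  obtain ⟨x, hx0, hx⟩ := exists_ne_zero_quadratic_eq_zero_of_mem_spectrum_fromBlocks hμ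
  refine re_mem_Icc_of_quadratic_eq_zero (dotProduct_star_self_pos_iff.mpr hx0)
    (hpsd₁.dotProduct_mulVec_nonneg x) (hpsd₂.dotProduct_mulVec_nonneg x)
    (hpsd₂.isHermitian.dotProduct_mulVec_le_specRad x) ?_
  simpa [dotProduct_add, dotProduct_smul] using congrArg (star x ⬝ᵥ ·) hx

theorem spectrum_double_size_re {n : ℕ} (A₁ A₂ : Matrix (Fin n) (Fin n) ℂ)
    (hH₁ : A₁.IsHermitian) (hH₂ : A₂.IsHermitian)
    (hpsd₁ : (A₁ + 1).PosSemidef) (hpsd₂ : A₂.PosSemidef)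
    (ρ₂ : ℝ) (hρ₂ : ρ₂ = specRad A₂)
    (C : Matrix (Fin n ⊕ Fin n) (Fin n ⊕ Fin n) ℂ)
    (hC : C = Matrix.fromBlocks 0 1 (-(A₁ + 1)) (-A₂))
    (μ : ℂ) (hμ : μ ∈ spectrum ℂ C) :
    μ.re ∈ Set.Icc (-ρ₂) (0 : ℝ) :=
  spectrum_double_size_re_general A₁ A₂ hpsd₁ hpsd₂ ρ₂ hρ₂ C hC μ hμ
end

section
/- Let b₁ < b₂ be real numbers, let h > 0, and let B = { x + iy : x ∈ [b₁, b₂], y ∈ [-h, 0] } be the closed rectangle in ℂ with vertices b₁, b₂, β₁ = b₁ - ih, β₂ = b₂ - ih. Let z ∈ ℂ satisfy Im(z) ∉ [-h, 0] and |z - ((b₁+b₂)/2 - ih/2)| ≤ √(((b₂-b₁)/2)² + (h/2)²) (i.e. z is enclosed by the circumcircle of B). Define (α₁, α₂) = (b₁ - z, b₂ - z) if Im(z) > 0 and (α₁, α₂) = (β₁ - z, β₂ - z) otherwise, and set p* = (|α₁|/α₁ + |α₂|/α₂)/(|α₁| + |α₂|). Then inf_{p∈ℂ} max_{λ∈B}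 |1 - (λ - z)p| = |α₁ - α₂|/(|α₁| + |α₂|), and this value is attained at p = p*, i.e. max_{λ∈B} |1 - (λ - z)p*| = |α₁ - α₂|/(|α₁| + |α₂|). -/
/-!
For every `p`, `α₁ - α₂ = α₁ (1 - α₂ p) - α₂ (1 - α₁ p)`, so
`‖1 - α p‖ ≥ M := ‖α₁ - α₂‖ / (‖α₁‖ + ‖α₂‖)` at one of the vertices `α = α₁, α₂` of the shifted
rectangle `B - z`: this is the lower bound.

For `p = p*` one computes `‖1 - α₁ p*‖ = ‖1 - α₂ p*‖ = M`. The sublevel set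
`{w | ‖1 - w p*‖ ≤ M}` is a disc, hence convex, so it contains `B - z` as soon as it contains the
two far corners `αᵢ ∓ h I` as well. Its centre `1 / p*` lies on the perpendicular bisector of
`α₁ α₂`, and the circumcircle condition on `z` puts it at least `h / 2` beyond the edge `α₁ α₂`,
which is exactly what is needed. The case of `z` below `B` reduces to `z` above `B` by complex
conjugation.
-/

open Complex Set ComplexConjugate

theorem norm_sub_div_le_max_norm_one_sub_mul {𝕜 : Type*} [NormedField 𝕜] (α₁ α₂ p : 𝕜) :
    ‖α₁ - α₂‖ / (‖α₁‖ + ‖α₂‖) ≤ max ‖1 - α₁ * p‖ ‖1 - α₂ * p‖ := by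
  refine div_le_of_le_mul₀ (by positivity) (le_max_of_le_left (norm_nonneg _)) ?_
  calc ‖α₁ - α₂‖ = ‖α₁ * (1 - α₂ * p) - α₂ * (1 - α₁ * p)‖ := by ring_nf
    _ ≤ ‖α₁‖ * ‖1 - α₂ * p‖ + ‖α₂‖ * ‖1 - α₁ * p‖ := by
      grw [norm_sub_le, norm_mul, norm_mul]
    _ ≤ max ‖1 - α₁ * p‖ ‖1 - α₂ * p‖ * (‖α₁‖ + ‖α₂‖) := by
      rw [mul_add, mul_comm, mul_comm _ ‖α₂‖]
      gcongr
      exacts [le_max_right _ _, le_max_left _ _]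

noncomputable def optimalParam (α₁ α₂ : ℂ) : ℂ :=
  ((‖α₁‖ : ℂ) / α₁ + (‖α₂‖ : ℂ) / α₂) / ((‖α₁‖ : ℂ) + (‖α₂‖ : ℂ))

theorem optimalParam_comm (α₁ α₂ : ℂ) : optimalParam α₁ α₂ = optimalParam α₂ α₁ := by
  simp only [optimalParam, add_comm]

theorem conj_optimalParam (α₁ α₂ : ℂ) :
    conj (optimalParam α₁ α₂) = optimalParam (conj α₁) (conj α₂) := by
  simp [optimalParam, map_div₀]

theorem norm_one_sub_conj_mul_optimalParam (w α₁ α₂ : ℂ) :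
    ‖1 - conj w * optimalParam (conj α₁) (conj α₂)‖ = ‖1 - w * optimalParam α₁ α₂‖ := by
  rw [← conj_optimalParam, ← norm_conj]
  simp

theorem optimalParam_mul (α₁ α₂ : ℂ) :
    optimalParam α₁ α₂ * (‖α₁‖ * ‖α₂‖ * (‖α₁‖ + ‖α₂‖) : ℝ) = ‖α₂‖ * conj α₁ + ‖α₁‖ * conj α₂ := by
  rcases eq_or_ne α₁ 0 with rfl | h₁
  · simp
  rcases eq_or_ne α₂ 0 with rfl | h₂
  · simp
  have hsum : (‖α₁‖ : ℂ) + ‖α₂‖ ≠ 0 := by norm_cast; positivity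
  have hconj : ∀ α : ℂ, α ≠ 0 → conj α = (‖α‖ : ℂ) ^ 2 / α := fun α hα => by
    rw [eq_div_iff hα, mul_comm, mul_conj, normSq_eq_norm_sq, ofReal_pow]
  rw [hconj α₁ h₁, hconj α₂ h₂, optimalParam]
  push_cast
  field_simp

theorem norm_one_sub_mul_optimalParam {α₁ α₂ : ℂ} (h₁ : α₁ ≠ 0) (h₂ : α₂ ≠ 0) :
    ‖1 - α₁ * optimalParam α₁ α₂‖ = ‖α₁ - α₂‖ / (‖α₁‖ + ‖α₂‖) := by
  have hsum : (‖α₁‖ : ℂ) + ‖α₂‖ ≠ 0 := by norm_cast; positivity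
  have : 1 - α₁ * optimalParam α₁ α₂ = ‖α₂‖ * (α₂ - α₁) / (α₂ * (‖α₁‖ + ‖α₂‖)) := by
    rw [optimalParam]
    field_simp
    ring
  rw [this, norm_div, norm_mul, norm_mul, norm_sub_rev]
  norm_cast
  rw [norm_norm, Real.norm_of_nonneg (by positivity), mul_div_mul_left _ _ (by positivity)]

theorem convex_setOf_norm_one_sub_mul_le (p : ℂ) (M : ℝ) :
    Convex ℝ {w : ℂ | ‖1 - w * p‖ ≤ M} := by
  have : {w : ℂ | ‖1 - w * p‖ ≤ M} = LinearMap.mulRight ℝ p ⁻¹' Metric.closedBall 1 M := by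
    ext w
    simp [dist_eq_norm, norm_sub_rev]
  exact this ▸ (convex_closedBall 1 M).linear_preimage _

theorem norm_one_sub_sub_mul_I_mul_le {α p : ℂ} {h : ℝ} (hh : 0 ≤ h)
    (hp : (h - 2 * α.im) * normSq p ≤ 2 * p.im) :
    ‖1 - (α - h * I) * p‖ ≤ ‖1 - α * p‖ := by
  have hsq : ‖1 - (α - h * I) * p‖ ^ 2
      = ‖1 - α * p‖ ^ 2 + h * ((h - 2 * α.im) * normSq p - 2 * p.im) := by
    simp only [Complex.sq_norm, normSq_apply, sub_re, sub_im, mul_re, mul_im, one_re, one_im,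
      ofReal_re, ofReal_im, I_re, I_im]
    ring
  have : h * ((h - 2 * α.im) * normSq p - 2 * p.im) ≤ 0 :=
    mul_nonpos_of_nonneg_of_nonpos hh (by linarith)
  exact (pow_le_pow_iff_left₀ (norm_nonneg _) (norm_nonneg _) two_ne_zero).1 (by linarith)

theorem sub_two_mul_mul_le_neg_mul_add_sq {a b c h r₁ r₂ : ℝ} (hc : c < 0)
    (hr₁ : 0 ≤ r₁) (hr₂ : 0 ≤ r₂) (e₁ : r₁ ^ 2 = a ^ 2 + c ^ 2) (e₂ : r₂ ^ 2 = b ^ 2 + c ^ 2)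
    (hcirc : a * b + c ^ 2 - h * c ≤ 0) :
    (h - 2 * c) * (r₁ * r₂ + (a * b + c ^ 2)) ≤ -c * (r₁ + r₂) ^ 2 := by
  set T := a * b + c ^ 2
  -- Lagrange's identity `(r₁ r₂)² = T² + c² (b - a)²`
  have hfactor : (r₁ * r₂ + T) * (r₁ * r₂ - T) = c ^ 2 * (b - a) ^ 2 := by
    linear_combination r₂ ^ 2 * e₁ + (a ^ 2 + c ^ 2) * e₂
  have hgap : -(h * c) ≤ r₁ * r₂ - T := by nlinarith [mul_nonneg hr₁ hr₂]
  have hN : 0 ≤ r₁ * r₂ + T := by nlinarith [mul_nonneg hr₁ hr₂]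
  have hmul : -c * (h * (r₁ * r₂ + T)) ≤ -c * (-c * (b - a) ^ 2) := by nlinarith
  have hhN : h * (r₁ * r₂ + T) ≤ -c * (b - a) ^ 2 := le_of_mul_le_mul_left hmul (neg_pos.2 hc)
  linear_combination hhN + c * e₁ + c * e₂

-- Equivalently `(1 / p*).im ≤ α₁.im - h / 2`: the centre of the disc `‖1 - w p*‖ ≤ M` lies at
-- least `h / 2` below the edge `α₁ α₂`, so it also contains `α₁ - h I` and `α₂ - h I`.
theorem sub_two_mul_im_mul_normSq_optimalParam_le {α₁ α₂ : ℂ} {h : ℝ} (him : α₁.im = α₂.im)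
    (hneg : α₁.im < 0) (hcirc : α₁.re * α₂.re + α₁.im ^ 2 - h * α₁.im ≤ 0) :
    (h - 2 * α₁.im) * normSq (optimalParam α₁ α₂) ≤ 2 * (optimalParam α₁ α₂).im := by
  set p := optimalParam α₁ α₂
  set r₁ := ‖α₁‖
  set r₂ := ‖α₂‖
  have h₁ : 0 < r₁ := norm_pos_iff.2 fun h => by simp [h] at hneg
  have h₂ : 0 < r₂ := norm_pos_iff.2 fun h => by simp [him, h] at hneg
  have e₁ : r₁ ^ 2 = α₁.re ^ 2 + α₁.im ^ 2 := by rw [Complex.sq_norm, normSq_apply]; ring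
  have e₂ : r₂ ^ 2 = α₂.re ^ 2 + α₁.im ^ 2 := by rw [Complex.sq_norm, normSq_apply, him]; ring
  set D := r₁ * r₂ * (r₁ + r₂)
  have hpD : p * D = r₂ * conj α₁ + r₁ * conj α₂ := optimalParam_mul α₁ α₂
  have hre : p.re * D = r₂ * α₁.re + r₁ * α₂.re := by simpa using congrArg re hpD
  have him' : p.im * D = -(r₁ + r₂) * α₁.im := by
    have := congrArg im hpD
    simp only [add_im, mul_im, ofReal_re, ofReal_im, conj_re, conj_im, ← him, mul_zero, zero_mul,
      add_zero, zero_add, mul_neg] at this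
    linarith
  have hnorm : (r₂ * α₁.re + r₁ * α₂.re) ^ 2 + (-(r₁ + r₂) * α₁.im) ^ 2
      = 2 * (r₁ * r₂) * (r₁ * r₂ + (α₁.re * α₂.re + α₁.im ^ 2)) := by
    linear_combination -r₂ ^ 2 * e₁ - r₁ ^ 2 * e₂
  have key := sub_two_mul_mul_le_neg_mul_add_sq hneg h₁.le h₂.le e₁ e₂ hcirc
  rw [normSq_apply]
  refine le_of_mul_le_mul_right ?_ (by positivity : 0 < D ^ 2)
  calc (h - 2 * α₁.im) * (p.re * p.re + p.im * p.im) * D ^ 2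
      = (h - 2 * α₁.im) * ((p.re * D) ^ 2 + (p.im * D) ^ 2) := by ring
    _ = 2 * (r₁ * r₂) * ((h - 2 * α₁.im) * (r₁ * r₂ + (α₁.re * α₂.re + α₁.im ^ 2))) := by
      rw [hre, him', hnorm]; ring
    _ ≤ 2 * (r₁ * r₂) * (-α₁.im * (r₁ + r₂) ^ 2) := by gcongr
    _ = 2 * (p.im * D) * D := by rw [him']; ring
    _ = 2 * p.im * D ^ 2 := by ring

theorem norm_one_sub_mul_optimalParam_le {α₁ α₂ : ℂ} {h : ℝ} (him : α₁.im = α₂.im)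
    (hneg : α₁.im < 0) (hh : 0 ≤ h) (hcirc : α₁.re * α₂.re + α₁.im ^ 2 - h * α₁.im ≤ 0)
    {w : ℂ} (hw : w ∈ Icc α₁.re α₂.re ×ℂ Icc (α₁.im - h) α₁.im) :
    ‖1 - w * optimalParam α₁ α₂‖ ≤ ‖α₁ - α₂‖ / (‖α₁‖ + ‖α₂‖) := by
  have h₁ : α₁ ≠ 0 := fun h => by simp [h] at hneg
  have h₂ : α₂ ≠ 0 := fun h => by simp [him, h] at hneg
  have hrect : Icc α₁.re α₂.re ×ℂ Icc (α₁.im - h) α₁.im = Rectangle α₁ (α₂ - h * I) := by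
    rw [Rectangle, uIcc_of_le, uIcc_of_ge] <;> simp [him, hw.1.1.trans hw.1.2, hh]
  have hv₁ := norm_one_sub_mul_optimalParam h₁ h₂
  have hv₂ : ‖1 - α₂ * optimalParam α₁ α₂‖ = ‖α₁ - α₂‖ / (‖α₁‖ + ‖α₂‖) := by
    rw [optimalParam_comm, norm_one_sub_mul_optimalParam h₂ h₁, norm_sub_rev, add_comm]
  have hshift := sub_two_mul_im_mul_normSq_optimalParam_le him hneg hcirc
  refine (convex_setOf_norm_one_sub_mul_le _ _).rectangle_subset hv₁.le ?_ ?_ ?_ (hrect ▸ hw)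
  · exact (norm_one_sub_sub_mul_I_mul_le hh (him ▸ hshift)).trans hv₂.le
  · have : (α₁.re : ℂ) + (α₂ - h * I).im * I = α₁ - h * I := by
      apply Complex.ext <;> simp [him]
    rw [this]
    exact (norm_one_sub_sub_mul_I_mul_le hh hshift).trans hv₁.le
  · have : ((α₂ - h * I).re : ℂ) + α₁.im * I = α₂ := by
      apply Complex.ext <;> simp [him]
    rw [this]
    exact hv₂.le

theorem iInf_sSup_image_eq_of_forall_exists_le {X P : Type*} {B : Set X} {F : P → X → ℝ}
    (hbdd : ∀ p, BddAbove (F p '' B)) {M : ℝ} (hlow : ∀ p, ∃ x ∈ B, M ≤ F p x) {p₀ : P}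
    (hup : ∀ x ∈ B, F p₀ x ≤ M) :
    ⨅ p, sSup (F p '' B) = M ∧ sSup (F p₀ '' B) = M := by
  have : Nonempty P := ⟨p₀⟩
  have hge : ∀ p, M ≤ sSup (F p '' B) := fun p =>
    let ⟨x, hx, hMx⟩ := hlow p
    hMx.trans (le_csSup (hbdd p) (mem_image_of_mem _ hx))
  have hsup : sSup (F p₀ '' B) = M := by
    obtain ⟨x, hx, -⟩ := hlow p₀
    exact (csSup_le ⟨_, mem_image_of_mem _ hx⟩ (forall_mem_image.2 hup)).antisymm (hge p₀)
  refine ⟨le_antisymm ?_ (le_ciInf hge), hsup⟩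
  exact (ciInf_le ⟨M, forall_mem_range.2 hge⟩ p₀).trans hsup.le

theorem inside_circumcircle_iff {b₁ b₂ h : ℝ} {z : ℂ} :
    ‖z - (((b₁ + b₂) / 2 : ℂ) - ((h / 2 : ℝ) : ℂ) * I)‖ ≤ √(((b₂ - b₁) / 2) ^ 2 + (h / 2) ^ 2) ↔
      (b₁ - z.re) * (b₂ - z.re) + z.im ^ 2 + h * z.im ≤ 0 := by
  rw [Real.le_sqrt (norm_nonneg _) (by positivity), Complex.sq_norm, normSq_apply]
  simp only [sub_re, sub_im, add_re, add_im, mul_re, mul_im, ofReal_re, ofReal_im, I_re, I_im,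
    div_ofNat_re, div_ofNat_im]
  constructor <;> intro <;> linarith

theorem norm_one_sub_sub_mul_optimalParam_le_of_im_pos {b₁ b₂ h : ℝ} {z l : ℂ} (hh : 0 ≤ h)
    (hz : 0 < z.im) (hcirc : (b₁ - z.re) * (b₂ - z.re) + z.im ^ 2 + h * z.im ≤ 0)
    (hl : l ∈ Icc b₁ b₂ ×ℂ Icc (-h) 0) :
    ‖1 - (l - z) * optimalParam (b₁ - z) (b₂ - z)‖
      ≤ ‖(b₁ - z) - (b₂ - z)‖ / (‖(b₁ : ℂ) - z‖ + ‖(b₂ : ℂ) - z‖) := by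
  refine norm_one_sub_mul_optimalParam_le (by simp) (by simpa) hh
    (by simp only [sub_re, sub_im, ofReal_re, ofReal_im, zero_sub, neg_sq]; linarith) ?_
  simp only [mem_reProdIm, mem_Icc, sub_re, sub_im, ofReal_re, ofReal_im] at hl ⊢
  refine ⟨⟨?_, ?_⟩, ?_, ?_⟩ <;> linarith

theorem norm_one_sub_sub_mul_optimalParam_le_of_im_lt {b₁ b₂ h : ℝ} {z l : ℂ} (hh : 0 ≤ h)
    (hz : z.im < -h) (hcirc : (b₁ - z.re) * (b₂ - z.re) + z.im ^ 2 + h * z.im ≤ 0)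
    (hl : l ∈ Icc b₁ b₂ ×ℂ Icc (-h) 0) :
    ‖1 - (l - z) * optimalParam (b₁ - h * I - z) (b₂ - h * I - z)‖
      ≤ ‖(b₁ - h * I - z) - (b₂ - h * I - z)‖
        / (‖(b₁ : ℂ) - h * I - z‖ + ‖(b₂ : ℂ) - h * I - z‖) := by
  -- conjugation reflects the rectangle to one below `0`, with top edge `conj (bᵢ - h I - z)`
  rw [← norm_one_sub_conj_mul_optimalParam]
  have hre (b : ℝ) : (conj ((b : ℂ) - h * I - z)).re = b - z.re := by simp
  have him (b : ℝ) : (conj ((b : ℂ) - h * I - z)).im = h + z.im := by simp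
  refine (norm_one_sub_mul_optimalParam_le (by rw [him, him]) (by rw [him]; linarith) hh
    (by rw [hre, hre, him]; linarith) ?_).trans_eq (by simp only [← map_sub, norm_conj])
  simp only [mem_reProdIm, mem_Icc] at hl
  simp only [mem_reProdIm, mem_Icc, hre, him, conj_re, conj_im, sub_re, sub_im]
  refine ⟨⟨?_, ?_⟩, ?_, ?_⟩ <;> linarith

theorem richardson_optimal_rate (b₁ b₂ h : ℝ) (hb : b₁ < b₂) (hh : 0 < h)
    (B : Set ℂ) (hB : B = {w : ℂ | w.re ∈ Set.Icc b₁ b₂ ∧ w.im ∈ Set.Icc (-h) 0})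
    (β₁ β₂ : ℂ) (hβ₁ : β₁ = (b₁ : ℂ) - (h : ℂ) * Complex.I)
    (hβ₂ : β₂ = (b₂ : ℂ) - (h : ℂ) * Complex.I)
    (z : ℂ) (hzim : z.im ∉ Set.Icc (-h) 0)
    (hzcirc : ‖z - (((b₁ + b₂) / 2 : ℂ) - ((h / 2 : ℝ) : ℂ) * Complex.I)‖
        ≤ Real.sqrt (((b₂ - b₁) / 2) ^ 2 + (h / 2) ^ 2))
    (α₁ α₂ : ℂ)
    (hα : (α₁, α₂) = if 0 < z.im then ((b₁ : ℂ) - z, (b₂ : ℂ) - z) else (β₁ - z, β₂ - z))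
    (pstar : ℂ)
    (hpstar : pstar = ((‖α₁‖ : ℂ) / α₁ + (‖α₂‖ : ℂ) / α₂) / ((‖α₁‖ : ℂ) + (‖α₂‖ : ℂ))) :
    (⨅ p : ℂ, sSup ((fun l => ‖1 - (l - z) * p‖) '' B)) = ‖α₁ - α₂‖ / (‖α₁‖ + ‖α₂‖) ∧
    sSup ((fun l => ‖1 - (l - z) * pstar‖) '' B) = ‖α₁ - α₂‖ / (‖α₁‖ + ‖α₂‖) := by
  subst hB hβ₁ hβ₂ hpstar
  have hcirc := inside_circumcircle_iff.1 hzcirc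
  have hB : IsCompact (Icc b₁ b₂ ×ℂ Icc (-h) 0) := isCompact_Icc.reProdIm isCompact_Icc
  obtain ⟨l₁, hl₁, l₂, hl₂, rfl, rfl, hup⟩ : ∃ l₁ ∈ Icc b₁ b₂ ×ℂ Icc (-h) 0,
      ∃ l₂ ∈ Icc b₁ b₂ ×ℂ Icc (-h) 0, α₁ = l₁ - z ∧ α₂ = l₂ - z ∧
      ∀ l ∈ Icc b₁ b₂ ×ℂ Icc (-h) 0,
        ‖1 - (l - z) * optimalParam α₁ α₂‖ ≤ ‖α₁ - α₂‖ / (‖α₁‖ + ‖α₂‖) := by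
    split_ifs at hα with hz <;> obtain ⟨rfl, rfl⟩ := Prod.mk.inj hα
    · refine ⟨b₁, ?_, b₂, ?_, rfl, rfl,
        fun l hl => norm_one_sub_sub_mul_optimalParam_le_of_im_pos hh.le hz hcirc hl⟩ <;>
      simp [mem_reProdIm, hb.le, hh.le]
    · have hz' : z.im < -h := not_le.1 fun h' => hzim ⟨h', not_lt.1 hz⟩
      refine ⟨b₁ - h * I, ?_, b₂ - h * I, ?_, rfl, rfl,
        fun l hl => norm_one_sub_sub_mul_optimalParam_le_of_im_lt hh.le hz' hcirc hl⟩ <;>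
      simp [mem_reProdIm, hb.le, hh.le]
  refine iInf_sSup_image_eq_of_forall_exists_le (F := fun p l => ‖1 - (l - z) * p‖)
    (fun p => (hB.image (by fun_prop)).bddAbove) (fun p => ?_) hup
  rcases le_max_iff.1 (norm_sub_div_le_max_norm_one_sub_mul (l₁ - z) (l₂ - z) p) with h | h
  exacts [⟨l₁, hl₁, h⟩, ⟨l₂, hl₂, h⟩]
end

section
/- Let A be an n×n complex matrix, let z, z₀ ∈ ℂ and δ ∈ ℝ, let q ≥ 1 be an integer, and define the polynomial p̃(λ) = Σ_{j=0}^{q} (-iδ(λ - z₀))ʲ / j!. Let f ∈ ℂⁿ and suppose y ∈ ℂⁿ satisfies (A - zI)y = f and p̃(z) ≠ 0. Given y' ∈ ℂⁿ, define k₁ = -iδ((A - z₀I)y' - f), kⱼ = (-iδ/j)((A - z₀I)k_{j-1} - ((-iδ(z - z₀))^{j-1}/(j-1)!)·f) for 2 ≤ j ≤ q, and y'' = (y' + Σ_{j=1}^{q} kⱼ)/p̃(z). Then y'' - y = (1/p̃(z)) · p̃(A)(y' - y), where p̃(A) = Σ_{j=0}^{q} ((-iδ)ʲ/j!)(A - z₀I)ʲ.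 In particular, if y' = y then y'' = y, i.e. the solution of (A - zI)y = f is a fixed point of the iteration. -/
open Matrix

theorem exp_fixed_point_iteration {n : ℕ} (A : Matrix (Fin n) (Fin n) ℂ)
    (z z₀ : ℂ) (δ : ℝ) (q : ℕ) (hq : 1 ≤ q)
    (pt : ℂ → ℂ)
    (hpt : ∀ w : ℂ, pt w =
      ∑ j ∈ Finset.range (q + 1), (-Complex.I * (δ : ℂ) * (w - z₀)) ^ j / (Nat.factorial j : ℂ))
    (f y : Fin n → ℂ) (hy : (A - z • 1).mulVec y = f) (hptz : pt z ≠ 0)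
    (y' : Fin n → ℂ) (k : ℕ → Fin n → ℂ)
    (hk1 : k 1 = (-Complex.I * (δ : ℂ)) • ((A - z₀ • 1).mulVec y' - f))
    (hkj : ∀ j, 2 ≤ j → j ≤ q →
      k j = (-Complex.I * (δ : ℂ) / (j : ℂ)) •
        ((A - z₀ • 1).mulVec (k (j - 1))
          - ((-Complex.I * (δ : ℂ) * (z - z₀)) ^ (j - 1) / (Nat.factorial (j - 1) : ℂ)) • f))
    (y'' : Fin n → ℂ)
    (hy'' : y'' = (pt z)⁻¹ • (y' + ∑ j ∈ Finset.Icc 1 q, k j)) :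
    y'' - y = (pt z)⁻¹ •
        ∑ j ∈ Finset.range (q + 1),
          ((-Complex.I * (δ : ℂ)) ^ j / (Nat.factorial j : ℂ)) •
            ((A - z₀ • 1) ^ j).mulVec (y' - y) ∧
      (y' = y → y'' = y) := by
  set c : ℂ := -Complex.I * (δ : ℂ) with hc
  set B : Matrix (Fin n) (Fin n) ℂ := A - z₀ • 1 with hB
  have hBy : B.mulVec y = f + (z - z₀) • y := by
    have : B = (A - z • 1) + (z - z₀) • 1 := by
      rw [hB]; ext i j; simp [Matrix.sub_apply, Matrix.add_apply, Matrix.smul_apply]; ring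
    rw [this, Matrix.add_mulVec, hy, Matrix.smul_mulVec, Matrix.one_mulVec]
  have key : ∀ j, 1 ≤ j → j ≤ q →
      k j = (c ^ j / (Nat.factorial j : ℂ)) • ((B ^ j).mulVec (y' - y))
        + ((c * (z - z₀)) ^ j / (Nat.factorial j : ℂ)) • y := by
    intro j hj
    induction j, hj using Nat.le_induction with
    | base =>
      intro _
      rw [hk1]
      have h1 : B.mulVec y' - f = B.mulVec (y' - y) + (z - z₀) • y := by
        rw [Matrix.mulVec_sub, hBy]; abel
      rw [h1]
      simp [pow_one, smul_add, smul_smul]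
    | succ j hj ih =>
      intro hjq
      have ihj := ih (by omega)
      have hstep := hkj (j + 1) (by omega) hjq
      simp only [Nat.add_sub_cancel] at hstep
      rw [hstep, ihj]
      have hpow : ∀ v : Fin n → ℂ, B.mulVec ((B ^ j).mulVec v) = (B ^ (j + 1)).mulVec v := by
        intro v; rw [Matrix.mulVec_mulVec, ← pow_succ']
      rw [Matrix.mulVec_add, Matrix.mulVec_smul, Matrix.mulVec_smul, hpow, hBy]
      have hfac : ((Nat.factorial (j + 1) : ℂ)) = ((j : ℂ) + 1) * (Nat.factorial j : ℂ) := by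
        push_cast [Nat.factorial_succ]; ring
      have hj1 : ((j : ℂ) + 1) ≠ 0 := Nat.cast_add_one_ne_zero j
      have hjf : (Nat.factorial j : ℂ) ≠ 0 := by
        exact_mod_cast Nat.cast_ne_zero.mpr (Nat.factorial_ne_zero j)
      have e1 : (c / ((j : ℕ) + 1 : ℂ)) * (c ^ j / (Nat.factorial j : ℂ))
          = c ^ (j + 1) / (Nat.factorial (j + 1) : ℂ) := by
        rw [hfac]; field_simp; ring
      have e2 : (c / ((j : ℕ) + 1 : ℂ)) * ((c * (z - z₀)) ^ j / (Nat.factorial j : ℂ) * (z - z₀))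
          = (c * (z - z₀)) ^ (j + 1) / (Nat.factorial (j + 1) : ℂ) := by
        rw [hfac]; field_simp; ring
      push_cast
      simp only [smul_sub, smul_add, smul_smul]
      rw [e1, e2]
      abel
  -- definitions of the two summand families
  have hsplit : Finset.range (q + 1) = insert 0 (Finset.Icc 1 q) := by
    ext x; simp [Finset.mem_range, Finset.mem_Icc]; omega
  have h0 : (0 : ℕ) ∉ Finset.Icc 1 q := by simp
  have hsum : y' + ∑ j ∈ Finset.Icc 1 q, k j
      = (∑ j ∈ Finset.range (q + 1), (c ^ j / (Nat.factorial j : ℂ)) • ((B ^ j).mulVec (y' - y)))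
        + pt z • y := by
    rw [Finset.sum_congr rfl (fun j hj => key j (Finset.mem_Icc.mp hj).1 (Finset.mem_Icc.mp hj).2)]
    rw [Finset.sum_add_distrib]
    rw [hpt z]
    rw [Finset.sum_smul]
    simp only [hsplit, Finset.sum_insert h0]
    simp only [pow_zero, Nat.factorial_zero, Nat.cast_one, div_one, one_smul, pow_zero,
      Matrix.one_mulVec]
    abel
  have main : y'' - y = (pt z)⁻¹ •
      ∑ j ∈ Finset.range (q + 1), (c ^ j / (Nat.factorial j : ℂ)) • ((B ^ j).mulVec (y' - y)) := by
    rw [hy'', hsum, smul_add, smul_smul, inv_mul_cancel₀ hptz, one_smul, add_sub_cancel_right]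
  refine ⟨main, fun h => ?_⟩
  have h0' : y'' - y = 0 := by
    rw [main, h]
    simp
  exact sub_eq_zero.mp h0'
end

section
/- Let (ω_m) be a sequence of positive real numbers with ω_m → ∞, and let z_m = a_m - i·b_m be a sequence of complex numbers with a_m ≥ 0 and b_m ≥ 0. Suppose there exist constants c₁ > 0 and c₂ > 0 such that b_m ≥ c₁·ω_m and b_m ≥ c₂·a_m for all m. Then there exists M such that for all m ≥ M, one has (ω_m - z_m) ≠ e^{-i z_m}·(ω_m + z_m) and (ω_m - z_m) ≠ -e^{-i z_m}·(ω_m + z_m); that is, z_m does not solve the equation (ω - z)/(ω + z) = ± e^{-iz} with ω = ω_m for sufficiently large m. -/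
/-!
Write `z = a - b i`. Then `|e^{-iz}| = e^{-b}` while `|ω - z| ≥ b` and, because `ω` and `a` are
bounded by multiples of `b`, `|ω + z| ≤ C b` for a constant `C`. As `b_m ≥ c₁ ω_m → ∞`, eventually
`C < e^{b_m}`, so that `|e^{-iz}(ω + z)| < |ω - z|` and neither sign can give an equality.
-/

open Complex Filter

theorem ne_mul_and_ne_neg_mul_of_norm_mul_lt {R : Type*} [SeminormedRing R] {u v w : R}
    (h : ‖u * v‖ < ‖w‖) : w ≠ u * v ∧ w ≠ -u * v := by
  constructor <;> rintro rfl
  · exact h.false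
  · rw [neg_mul, norm_neg] at h
    exact h.false

theorem norm_exp_neg_I_mul_sub_mul_I (a b : ℝ) : ‖exp (-I * (a - b * I))‖ = Real.exp (-b) := by
  simp [norm_exp]

theorem abs_le_norm_ofReal_sub_sub_mul_I (ω a b : ℝ) : |b| ≤ ‖(ω : ℂ) - (a - b * I)‖ := by
  simpa using abs_im_le_norm ((ω : ℂ) - (a - b * I))

theorem norm_ofReal_add_sub_mul_I_le {ω a b : ℝ} (hω : 0 ≤ ω) (ha : 0 ≤ a) (hb : 0 ≤ b) :
    ‖(ω : ℂ) + (a - b * I)‖ ≤ ω + a + b := by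
  calc ‖(ω : ℂ) + (a - b * I)‖ ≤ |((ω : ℂ) + (a - b * I)).re| + |((ω : ℂ) + (a - b * I)).im| :=
        norm_le_abs_re_add_abs_im _
    _ = ω + a + b := by simp [abs_of_nonneg (add_nonneg hω ha), abs_of_nonneg hb]

theorem norm_exp_neg_I_mul_ofReal_add_lt {ω a b C : ℝ} (hb : 0 < b)
    (hC : ‖(ω : ℂ) + (a - b * I)‖ ≤ C * b) (hCb : C < Real.exp b) :
    ‖exp (-I * (a - b * I)) * ((ω : ℂ) + (a - b * I))‖ < ‖(ω : ℂ) - (a - b * I)‖ := by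
  have hexpC : Real.exp (-b) * C < 1 := by
    rw [Real.exp_neg, inv_mul_lt_iff₀ (Real.exp_pos b), mul_one]
    exact hCb
  calc ‖exp (-I * (a - b * I)) * ((ω : ℂ) + (a - b * I))‖
      = Real.exp (-b) * ‖(ω : ℂ) + (a - b * I)‖ := by
        rw [norm_mul, norm_exp_neg_I_mul_sub_mul_I]
    _ ≤ Real.exp (-b) * C * b := by
        rw [mul_assoc]
        gcongr
    _ < b := mul_lt_of_lt_one_left hb hexpC
    _ ≤ ‖(ω : ℂ) - (a - b * I)‖ := (le_abs_self b).trans (abs_le_norm_ofReal_sub_sub_mul_I ω a b)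

theorem not_root_for_large_m_general (ω a b : ℕ → ℝ) (hωpos : ∀ m, 0 < ω m)
    (hω : Filter.Tendsto ω Filter.atTop Filter.atTop)
    (ha : ∀ m, 0 ≤ a m)
    (z : ℕ → ℂ) (hz : ∀ m, z m = (a m : ℂ) - (b m : ℂ) * Complex.I)
    (c₁ c₂ : ℝ) (hc₁ : 0 < c₁) (hc₂ : 0 < c₂)
    (hbc₁ : ∀ m, c₁ * ω m ≤ b m) (hbc₂ : ∀ m, c₂ * a m ≤ b m) :
    ∃ M : ℕ, ∀ m, M ≤ m →
      ((ω m : ℂ) - z m ≠ Complex.exp (-Complex.I * z m) * ((ω m : ℂ) + z m)) ∧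
      ((ω m : ℂ) - z m ≠ -Complex.exp (-Complex.I * z m) * ((ω m : ℂ) + z m)) := by
  set C := c₁⁻¹ + c₂⁻¹ + 1
  have hb_atTop : Tendsto b atTop atTop :=
    tendsto_atTop_mono hbc₁ (hω.const_mul_atTop hc₁)
  rw [← eventually_atTop]
  filter_upwards [hb_atTop.eventually_gt_atTop 0,
    (Real.tendsto_exp_atTop.comp hb_atTop).eventually_gt_atTop C] with m hbm hCb
  have hbound : ‖(ω m : ℂ) + (a m - b m * I)‖ ≤ C * b m := by
    have hωb : ω m ≤ c₁⁻¹ * b m := (le_inv_mul_iff₀ hc₁).mpr (hbc₁ m)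
    have hab : a m ≤ c₂⁻¹ * b m := (le_inv_mul_iff₀ hc₂).mpr (hbc₂ m)
    calc ‖(ω m : ℂ) + (a m - b m * I)‖ ≤ ω m + a m + b m :=
          norm_ofReal_add_sub_mul_I_le (hωpos m).le (ha m) hbm.le
      _ ≤ C * b m := by linarith
  rw [hz m]
  exact ne_mul_and_ne_neg_mul_of_norm_mul_lt (norm_exp_neg_I_mul_ofReal_add_lt hbm hbound hCb)

theorem not_root_for_large_m (ω a b : ℕ → ℝ) (hωpos : ∀ m, 0 < ω m)
    (hω : Filter.Tendsto ω Filter.atTop Filter.atTop)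
    (ha : ∀ m, 0 ≤ a m) (hb : ∀ m, 0 ≤ b m)
    (z : ℕ → ℂ) (hz : ∀ m, z m = (a m : ℂ) - (b m : ℂ) * Complex.I)
    (c₁ c₂ : ℝ) (hc₁ : 0 < c₁) (hc₂ : 0 < c₂)
    (hbc₁ : ∀ m, c₁ * ω m ≤ b m) (hbc₂ : ∀ m, c₂ * a m ≤ b m) :
    ∃ M : ℕ, ∀ m, M ≤ m →
      ((ω m : ℂ) - z m ≠ Complex.exp (-Complex.I * z m) * ((ω m : ℂ) + z m)) ∧
      ((ω m : ℂ) - z m ≠ -Complex.exp (-Complex.I * z m) * ((ω m : ℂ) + z m)) :=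
  not_root_for_large_m_general ω a b hωpos hω ha z hz c₁ c₂ hc₁ hc₂ hbc₁ hbc₂
end

section
/- Let n ≥ 1 and let N be an n×n complex matrix that is normal (NᴴN = NNᴴ). Let s, ρ, ω be positive real numbers with s ≤ ρω, and suppose every eigenvalue λ of N satisfies |λ| ≤ ρω² and Im(λ) ≤ -sω. Then for every natural number k and every vector r₀ ∈ ℂⁿ there exists a polynomial P ∈ ℂ[X] of degree at most k with P(0) = 1 such that ‖P(N)·r₀‖₂ ≤ μᵏ·‖r₀‖₂, where μ = √(1 - s²/(ρ²ω²)). -/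
/-!
For a normal matrix the L2 operator norm of `p(N)` is the maximum of `|p|` on the spectrum, so it
suffices to find a polynomial `p(z) = (1 - τ i z)ᵏ` that is small on the spectrum. Writing
`R = ρω²` and `β = sω`, every eigenvalue satisfies `|1 - τ i z|² = 1 + 2τ Im z + τ²|z|²
≤ 1 - 2τβ + τ²R²`, and the choice `τ = β / R²` minimises the right-hand side at `1 - β²/R²`.
-/

open Matrix Polynomial Complex
open scoped Matrix.Norms.L2Operator

lemma IsStarNormal.norm_aeval_le {A : Type*} [CStarAlgebra A] {a : A} [IsStarNormal a]
    (p : ℂ[X]) {c : ℝ} (hc : 0 ≤ c) (h : ∀ z ∈ spectrum ℂ a, ‖p.eval z‖ ≤ c) :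
    ‖aeval a p‖ ≤ c := by
  rw [← cfc_polynomial p a]
  exact norm_cfc_le hc h

namespace Complex

lemma sq_norm_one_sub_mul_I_mul (τ : ℝ) (z : ℂ) :
    ‖1 - τ * I * z‖ ^ 2 = 1 + 2 * τ * z.im + τ ^ 2 * ‖z‖ ^ 2 := by
  simp only [Complex.sq_norm, normSq_apply, sub_re, one_re, mul_re, ofReal_re, I_re, mul_zero,
    ofReal_im, I_im, mul_one, sub_self, zero_mul, mul_im, add_zero, zero_sub, sub_neg_eq_add,
    sub_im, one_im, zero_add, mul_neg, neg_mul, neg_neg]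
  ring

lemma norm_one_sub_mul_I_mul_le {R β : ℝ} (hβ : 0 ≤ β) {z : ℂ} (hR : ‖z‖ ≤ R)
    (him : z.im ≤ -β) : ‖1 - (β / R ^ 2 : ℝ) * I * z‖ ≤ √(1 - β ^ 2 / R ^ 2) := by
  refine Real.le_sqrt_of_sq_le ?_
  rw [sq_norm_one_sub_mul_I_mul]
  rcases eq_or_ne R 0 with rfl | hR0
  · simp
  have hz : ‖z‖ ^ 2 ≤ R ^ 2 := pow_le_pow_left₀ (norm_nonneg z) hR 2
  have hτ : 0 ≤ β / R ^ 2 := by positivity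
  calc 1 + 2 * (β / R ^ 2) * z.im + (β / R ^ 2) ^ 2 * ‖z‖ ^ 2
      ≤ 1 + 2 * (β / R ^ 2) * -β + (β / R ^ 2) ^ 2 * R ^ 2 := by gcongr
    _ = 1 - β ^ 2 / R ^ 2 := by field_simp; ring

end Complex

theorem gmres_convergence_normal_general {n : ℕ}
    (N : Matrix (Fin n) (Fin n) ℂ) (hN : Nᴴ * N = N * Nᴴ)
    (s ρ ω : ℝ) (hs : 0 < s) (hω : 0 < ω)
    (hspec : ∀ l ∈ spectrum ℂ N, ‖l‖ ≤ ρ * ω ^ 2 ∧ l.im ≤ -(s * ω)) :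
    ∀ (k : ℕ) (r₀ : EuclideanSpace ℂ (Fin n)),
      ∃ P : Polynomial ℂ, P.natDegree ≤ k ∧ P.eval 0 = 1 ∧
        ‖(WithLp.equiv 2 (Fin n → ℂ)).symm
            ((Polynomial.aeval N P).mulVec (WithLp.equiv 2 (Fin n → ℂ) r₀))‖
          ≤ (Real.sqrt (1 - s ^ 2 / (ρ ^ 2 * ω ^ 2))) ^ k * ‖r₀‖ := by
  intro k r₀
  have : IsStarNormal N := ⟨hN⟩
  set τ : ℝ := s * ω / (ρ * ω ^ 2) ^ 2
  have hμ : (s * ω) ^ 2 / (ρ * ω ^ 2) ^ 2 = s ^ 2 / (ρ ^ 2 * ω ^ 2) := by field_simp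
  refine ⟨(1 - C (τ * I) * X) ^ k, by compute_degree!, by simp, ?_⟩
  calc _ ≤ ‖aeval N ((1 - C (τ * I) * X) ^ k)‖ * ‖r₀‖ := l2_opNorm_mulVec _ r₀
    _ ≤ _ := by
      gcongr
      refine IsStarNormal.norm_aeval_le _ (by positivity) fun z hz ↦ ?_
      obtain ⟨hzR, hzim⟩ := hspec z hz
      simp only [eval_pow, eval_sub, eval_one, eval_mul, eval_C, eval_X, norm_pow]
      rw [← hμ]
      gcongr
      exact norm_one_sub_mul_I_mul_le (by positivity) hzR hzim

theorem gmres_convergence_normal {n : ℕ} (hn : 1 ≤ n)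
    (N : Matrix (Fin n) (Fin n) ℂ) (hN : Nᴴ * N = N * Nᴴ)
    (s ρ ω : ℝ) (hs : 0 < s) (hρ : 0 < ρ) (hω : 0 < ω) (hsρω : s ≤ ρ * ω)
    (hspec : ∀ l ∈ spectrum ℂ N, ‖l‖ ≤ ρ * ω ^ 2 ∧ l.im ≤ -(s * ω)) :
    ∀ (k : ℕ) (r₀ : EuclideanSpace ℂ (Fin n)),
      ∃ P : Polynomial ℂ, P.natDegree ≤ k ∧ P.eval 0 = 1 ∧
        ‖(WithLp.equiv 2 (Fin n → ℂ)).symm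
            ((Polynomial.aeval N P).mulVec (WithLp.equiv 2 (Fin n → ℂ) r₀))‖
          ≤ (Real.sqrt (1 - s ^ 2 / (ρ ^ 2 * ω ^ 2))) ^ k * ‖r₀‖ :=
  gmres_convergence_normal_general N hN s ρ ω hs hω hspec
end

section
/- Let ω > 0 be a real number and let z ∈ ℂ satisfy Re(z) ≥ 0 and Im(z) > 0. Then (ω - z) ≠ e^{-iz}·(ω + z) and (ω - z) ≠ -e^{-iz}·(ω + z); that is, the equation (ω - z)/(ω + z) = ± e^{-iz} has no root in the open upper part of the first quadrant {z : Re(z) ≥ 0, Im(z) > 0}. -/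
/-! Since `ω > 0` and `Re z ≥ 0`, the point `z` is at least as close to `ω` as to `-ω`, so
`‖ω - z‖ ≤ ‖ω + z‖`; but `‖e^{-iz}‖ = e^{Im z} > 1`, so `‖±e^{-iz} (ω + z)‖ > ‖ω + z‖`. -/

namespace Complex

theorem norm_ofReal_sub_le_norm_ofReal_add {ω : ℝ} (hω : 0 ≤ ω) {z : ℂ} (hz : 0 ≤ z.re) :
    ‖(ω : ℂ) - z‖ ≤ ‖(ω : ℂ) + z‖ := by
  rw [← sq_le_sq₀ (norm_nonneg _) (norm_nonneg _), Complex.sq_norm, Complex.sq_norm,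
    normSq_apply, normSq_apply]
  simp only [sub_re, add_re, sub_im, add_im, ofReal_re, ofReal_im]
  nlinarith [mul_nonneg hω hz]

theorem one_lt_norm_exp_neg_I_mul {z : ℂ} (hz : 0 < z.im) : 1 < ‖exp (-I * z)‖ := by
  rw [norm_exp, Real.one_lt_exp_iff]
  simpa using hz

end Complex

theorem ne_mul_of_norm_le_of_one_lt_norm {E : Type*} [NormedDivisionRing E] {a b c : E}
    (hab : ‖a‖ ≤ ‖b‖) (hb : b ≠ 0) (hc : 1 < ‖c‖) : a ≠ c * b := by
  rintro rfl
  rw [norm_mul] at hab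
  nlinarith [norm_pos_iff.mpr hb]

theorem no_root_in_upper_first_quadrant (ω : ℝ) (hω : 0 < ω)
    (z : ℂ) (hre : 0 ≤ z.re) (him : 0 < z.im) :
    ((ω : ℂ) - z ≠ Complex.exp (-Complex.I * z) * ((ω : ℂ) + z)) ∧
    ((ω : ℂ) - z ≠ -Complex.exp (-Complex.I * z) * ((ω : ℂ) + z)) := by
  have hle := Complex.norm_ofReal_sub_le_norm_ofReal_add hω.le hre
  have hne : (ω : ℂ) + z ≠ 0 := ne_of_apply_ne Complex.im (by simpa using him.ne')
  have hexp := Complex.one_lt_norm_exp_neg_I_mul him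
  exact ⟨ne_mul_of_norm_le_of_one_lt_norm hle hne hexp,
    ne_mul_of_norm_le_of_one_lt_norm hle hne (by rwa [norm_neg])⟩
end

section
/- Let s, ρ, ω be positive real numbers and let λ ∈ ℂ satisfy Im(λ) ≤ -sω and |λ| ≤ ρω². Then with t = s/(ρ²ω³), one has |1 - i·t·λ|² ≤ 1 - s²/(ρ²ω²). -/
/-! Expanding, `‖1 - i t z‖² = 1 + 2t Im z + t²‖z‖²`, so the hypotheses bound it by the quadratic
`1 - 2ta + t²R²` with `a = sω`, `R = ρω²`; the given `t` is its minimiser `a / R²`, where the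
value is `1 - a²/R²`. -/

open Complex

theorem norm_one_sub_I_mul_ofReal_mul_sq (t : ℝ) (z : ℂ) :
    ‖1 - I * t * z‖ ^ 2 = 1 + 2 * t * z.im + t ^ 2 * ‖z‖ ^ 2 := by
  simp only [Complex.sq_norm, normSq_apply, sub_re, sub_im, mul_re, mul_im, one_re, one_im,
    I_re, I_im, ofReal_re, ofReal_im]
  ring

theorem norm_one_sub_I_mul_ofReal_mul_sq_le {t a R : ℝ} {z : ℂ} (ht : 0 ≤ t) (him : z.im ≤ -a)
    (habs : ‖z‖ ≤ R) : ‖1 - I * t * z‖ ^ 2 ≤ 1 - 2 * t * a + t ^ 2 * R ^ 2 := by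
  have hsq : ‖z‖ ^ 2 ≤ R ^ 2 := pow_le_pow_left₀ (norm_nonneg z) habs 2
  rw [norm_one_sub_I_mul_ofReal_mul_sq]
  nlinarith [mul_le_mul_of_nonneg_left him ht, mul_le_mul_of_nonneg_left hsq (sq_nonneg t)]

theorem one_sub_two_mul_add_sq_mul_sq_at_div_sq (a R : ℝ) :
    1 - 2 * (a / R ^ 2) * a + (a / R ^ 2) ^ 2 * R ^ 2 = 1 - a ^ 2 / R ^ 2 := by
  rcases eq_or_ne R 0 with rfl | hR
  · simp
  · field_simp
    ring

theorem elman_one_step_estimate_general (s ρ ω : ℝ) (hs : 0 < s) (hω : 0 < ω)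
    (l : ℂ) (him : l.im ≤ -(s * ω)) (habs : ‖l‖ ≤ ρ * ω ^ 2)
    (t : ℝ) (ht : t = s / (ρ ^ 2 * ω ^ 3)) :
    ‖1 - Complex.I * (t : ℂ) * l‖ ^ 2 ≤ 1 - s ^ 2 / (ρ ^ 2 * ω ^ 2) := by
  have ht_vertex : t = s * ω / (ρ * ω ^ 2) ^ 2 := by
    rw [ht, mul_pow, ← pow_mul, ← mul_div_mul_right s _ hω.ne']
    ring
  calc ‖1 - I * t * l‖ ^ 2 ≤ 1 - 2 * t * (s * ω) + t ^ 2 * (ρ * ω ^ 2) ^ 2 :=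
        norm_one_sub_I_mul_ofReal_mul_sq_le (by rw [ht]; positivity) him habs
    _ = 1 - (s * ω) ^ 2 / (ρ * ω ^ 2) ^ 2 := by
        rw [ht_vertex, one_sub_two_mul_add_sq_mul_sq_at_div_sq]
    _ = 1 - s ^ 2 / (ρ ^ 2 * ω ^ 2) := by
        rw [← mul_div_mul_right (s ^ 2) _ (pow_ne_zero 2 hω.ne')]
        ring

theorem elman_one_step_estimate (s ρ ω : ℝ) (hs : 0 < s) (hρ : 0 < ρ) (hω : 0 < ω)
    (l : ℂ) (him : l.im ≤ -(s * ω)) (habs : ‖l‖ ≤ ρ * ω ^ 2)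
    (t : ℝ) (ht : t = s / (ρ ^ 2 * ω ^ 3)) :
    ‖1 - Complex.I * (t : ℂ) * l‖ ^ 2 ≤ 1 - s ^ 2 / (ρ ^ 2 * ω ^ 2) :=
  elman_one_step_estimate_general s ρ ω hs hω l him habs t ht
end

section
/- Let A be an n×n complex matrix, let z, z₀ ∈ ℂ and δ ∈ ℝ, let q ≥ 1 be an integer, let f ∈ ℂⁿ, and suppose y ∈ ℂⁿ satisfies (A - zI)y = f. Given y' ∈ ℂⁿ, define k₁ = -iδ((A - z₀I)y' - f) and kⱼ = (-iδ/j)((A - z₀I)k_{j-1} - ((-iδ(z - z₀))^{j-1}/(j-1)!)·f) for 2 ≤ j ≤ q. Then for every j with 1 ≤ j ≤ q, kⱼ - ((-iδ(z - z₀))ʲ/j!)·y = ((-iδ)ʲ/j!)·(A - z₀I)ʲ(y' - y). -/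
open Matrix

theorem exp_iteration_stage_identity {n : ℕ} (A : Matrix (Fin n) (Fin n) ℂ)
    (z z₀ : ℂ) (δ : ℝ) (q : ℕ) (hq : 1 ≤ q)
    (f y : Fin n → ℂ) (hy : (A - z • 1).mulVec y = f)
    (y' : Fin n → ℂ) (k : ℕ → Fin n → ℂ)
    (hk1 : k 1 = (-Complex.I * (δ : ℂ)) • ((A - z₀ • 1).mulVec y' - f))
    (hkj : ∀ j, 2 ≤ j → j ≤ q →
      k j = (-Complex.I * (δ : ℂ) / (j : ℂ)) •
        ((A - z₀ • 1).mulVec (k (j - 1))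
          - ((-Complex.I * (δ : ℂ) * (z - z₀)) ^ (j - 1) / (Nat.factorial (j - 1) : ℂ)) • f)) :
    ∀ j, 1 ≤ j → j ≤ q →
      k j - ((-Complex.I * (δ : ℂ) * (z - z₀)) ^ j / (Nat.factorial j : ℂ)) • y
        = ((-Complex.I * (δ : ℂ)) ^ j / (Nat.factorial j : ℂ)) •
            ((A - z₀ • 1) ^ j).mulVec (y' - y) := by
  set c : ℂ := -Complex.I * (δ : ℂ) with hc
  set B : Matrix (Fin n) (Fin n) ℂ := A - z₀ • 1 with hB
  have hf : f = B.mulVec y - (z - z₀) • y := by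
    have hAB : A - z • 1 = B - (z - z₀) • (1 : Matrix (Fin n) (Fin n) ℂ) := by
      rw [hB, sub_smul]; abel
    rw [← hy, hAB, sub_mulVec, smul_mulVec, one_mulVec]
  intro j h1 hj
  induction j, h1 using Nat.le_induction with
  | base =>
    rw [hk1, hf]
    simp only [pow_one, Nat.factorial_one, mulVec_sub]
    simp only [Nat.cast_one, div_one]
    module
  | succ j hj1 IH =>
    have hjq : j ≤ q := le_trans (Nat.le_succ j) hj
    have IH' := IH hjq
    have hkval : k j = ((c * (z - z₀)) ^ j / (Nat.factorial j : ℂ)) • y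
        + (c ^ j / (Nat.factorial j : ℂ)) • (B ^ j).mulVec (y' - y) := by
      rw [← IH']; abel
    have h2 : 2 ≤ j + 1 := by omega
    have hstep := hkj (j + 1) h2 hj
    simp only [Nat.add_sub_cancel] at hstep
    rw [hstep, hkval, hf, mulVec_add, mulVec_smul, mulVec_smul, mulVec_mulVec,
      ← pow_succ']
    have hmv : ((B ^ (j+1)) * B).mulVec (y' - y) = (B ^ (j+1+1)).mulVec (y' - y) := by
      rw [← pow_succ]
    have hfac : (Nat.factorial (j + 1) : ℂ) = ((j : ℂ) + 1) * (Nat.factorial j : ℂ) := by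
      push_cast [Nat.factorial_succ]; ring
    have hj0 : ((j : ℂ) + 1) ≠ 0 := by
      exact_mod_cast Nat.cast_add_one_ne_zero (R := ℂ) j
    have hfj : (Nat.factorial j : ℂ) ≠ 0 := by
      exact_mod_cast Nat.cast_ne_zero.mpr (Nat.factorial_ne_zero j)
    rw [mulVec_sub]
    simp only [hfac]
    match_scalars <;> (field_simp; try ring)
end

section
/- Let A₁ and A₂ be n×n complex Hermitian matrices such that A₁ + I is positive semidefinite and A₂ is positive semidefinite, and set ρ₂ = ρ(A₂). If z ∈ ℂ satisfies Im(z) > 0 or Im(z) < -ρ₂, then the matrix A₁ - i·A₂ - zI is invertible. -/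
/-!
If `(A₁ - i A₂ - z) v = 0` with `v ≠ 0`, the imaginary part of `vᴴ (A₁ - i A₂ - z) v` forces
`vᴴ A₂ v = -Im z · ‖v‖²`. Since `0 ≤ vᴴ A₂ v ≤ ρ₂ ‖v‖²`, this is impossible when `Im z > 0`
or `Im z < -ρ₂`.
-/

open Matrix
open scoped ComplexOrder

open scoped MatrixOrder

section

variable {n : Type*} [Fintype n] [DecidableEq n]

lemma Matrix.IsHermitian.star_dotProduct_mulVec_le {A : Matrix n n ℂ} (hA : A.IsHermitian)
    {r : ℝ} (hr : ∀ x ∈ spectrum ℝ A, x ≤ r) (v : n → ℂ) :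
    star v ⬝ᵥ (A *ᵥ v) ≤ r * (star v ⬝ᵥ v) := by
  have hle : (r • 1 - A).PosSemidef := by
    simpa [Algebra.algebraMap_eq_smul_one] using le_iff.mp (le_algebraMap_of_spectrum_le hr)
  have := hle.dotProduct_mulVec_nonneg v
  rw [sub_mulVec, dotProduct_sub, smul_mulVec, one_mulVec, dotProduct_smul, sub_nonneg] at this
  simpa [Complex.real_smul] using this

lemma Matrix.IsHermitian.im_star_dotProduct_sub_I_smul_sub_smul_one_mulVec {A₁ : Matrix n n ℂ}
    (h₁ : A₁.IsHermitian) (A₂ : Matrix n n ℂ) (z : ℂ) (v : n → ℂ) :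
    (star v ⬝ᵥ ((A₁ - Complex.I • A₂ - z • 1) *ᵥ v)).im
      = -(star v ⬝ᵥ (A₂ *ᵥ v)).re - z.im * (star v ⬝ᵥ v).re := by
  have ha : (star v ⬝ᵥ (A₁ *ᵥ v)).im = 0 := h₁.im_star_dotProduct_mulVec_self v
  have hc : (star v ⬝ᵥ v).im = 0 := by
    simpa using (isHermitian_one (α := ℂ) (n := n)).im_star_dotProduct_mulVec_self v
  simp only [sub_mulVec, smul_mulVec, one_mulVec, dotProduct_sub, dotProduct_smul, smul_eq_mul,
    Complex.sub_im, Complex.mul_im, Complex.I_re, Complex.I_im, ha, hc]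
  ring

end

lemma le_specRad_of_mem_spectrum_real {n : ℕ} {A : Matrix (Fin n) (Fin n) ℂ} {x : ℝ}
    (hx : x ∈ spectrum ℝ A) : x ≤ specRad A :=
  calc x ≤ ‖(x : ℂ)‖ := by rw [Complex.norm_real]; exact Real.le_norm_self x
    _ ≤ specRad A :=
      le_csSup (A.finite_spectrum.image _).bddAbove ⟨_, spectrum.algebraMap_mem ℂ hx, rfl⟩

theorem shifted_matrix_invertible_general {n : ℕ} (A₁ A₂ : Matrix (Fin n) (Fin n) ℂ)
    (hH₁ : A₁.IsHermitian) (hpsd₂ : A₂.PosSemidef)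
    (ρ₂ : ℝ) (hρ₂ : ρ₂ = specRad A₂)
    (z : ℂ) (hz : 0 < z.im ∨ z.im < -ρ₂) :
    IsUnit (A₁ - Complex.I • A₂ - z • (1 : Matrix (Fin n) (Fin n) ℂ)) := by
  rw [isUnit_iff_isUnit_det, isUnit_iff_ne_zero]
  intro hdet
  obtain ⟨v, hv, hkernel⟩ := exists_mulVec_eq_zero_iff.mpr hdet
  have him := hH₁.im_star_dotProduct_sub_I_smul_sub_smul_one_mulVec A₂ z v
  rw [hkernel, dotProduct_zero, Complex.zero_im] at him
  have hnonneg : 0 ≤ (star v ⬝ᵥ (A₂ *ᵥ v)).re :=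
    (Complex.le_def.mp (hpsd₂.dotProduct_mulVec_nonneg v)).1
  have hbound : (star v ⬝ᵥ (A₂ *ᵥ v)).re ≤ ρ₂ * (star v ⬝ᵥ v).re := by
    simpa using (Complex.le_def.mp (hpsd₂.isHermitian.star_dotProduct_mulVec_le
      (fun x hx => hρ₂ ▸ le_specRad_of_mem_spectrum_real hx) v)).1
  have hpos : 0 < (star v ⬝ᵥ v).re :=
    (Complex.lt_def.mp (dotProduct_star_self_pos_iff.mpr hv)).1
  rcases hz with hz | hz <;> nlinarith

theorem shifted_matrix_invertible {n : ℕ} (A₁ A₂ : Matrix (Fin n) (Fin n) ℂ)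
    (hH₁ : A₁.IsHermitian) (hH₂ : A₂.IsHermitian)
    (hpsd₁ : (A₁ + 1).PosSemidef) (hpsd₂ : A₂.PosSemidef)
    (ρ₂ : ℝ) (hρ₂ : ρ₂ = specRad A₂)
    (z : ℂ) (hz : 0 < z.im ∨ z.im < -ρ₂) :
    IsUnit (A₁ - Complex.I • A₂ - z • (1 : Matrix (Fin n) (Fin n) ℂ)) :=
  shifted_matrix_invertible_general A₁ A₂ hH₁ hpsd₂ ρ₂ hρ₂ z hz
end

section
/- Let J ≥ 2 be an even integer, let t > 0, ε > 0 and ρ₂ ≥ 0 be real numbers, set φ = π/J and r = (ρ₂/2 + ε)/sin(φ), and for j ∈ {1, …, J} define z_j = t·r·(cos((2j-1)φ) - cos(φ)) + i·(r·sin((2j-1)φ) - ρ₂/2). Then for every j ∈ {1, …, J}: Re(z_j) ≤ 0, and Im(z_j) ∉ (-ε - ρ₂, ε), i.e. either Im(z_j) ≥ ε or Im(z_j) ≤ -ρ₂ - ε. -/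
open Real

lemma cos_le_cos_aux {φ θ : ℝ} (h0 : 0 ≤ φ) (h1 : φ ≤ θ) (h2 : θ ≤ 2 * π - φ) :
    Real.cos θ ≤ Real.cos φ := by
  have key : Real.cos φ - Real.cos θ = 2 * Real.sin ((φ + θ)/2) * Real.sin ((θ - φ)/2) := by
    rw [Real.cos_sub_cos, show (φ - θ)/2 = -((θ - φ)/2) by ring, Real.sin_neg]; ring
  nlinarith [Real.sin_nonneg_of_nonneg_of_le_pi (x := (φ + θ)/2) (by linarith) (by linarith),
    Real.sin_nonneg_of_nonneg_of_le_pi (x := (θ - φ)/2) (by linarith) (by nlinarith [Real.pi_pos])]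

lemma sin_ge_sin_aux {φ θ : ℝ} (h0 : 0 ≤ φ) (h1 : φ ≤ θ) (h2 : θ ≤ π - φ) :
    Real.sin φ ≤ Real.sin θ := by
  have key : Real.sin θ - Real.sin φ = 2 * Real.sin ((θ - φ)/2) * Real.cos ((θ + φ)/2) := by
    rw [Real.sin_sub_sin]
  nlinarith [Real.sin_nonneg_of_nonneg_of_le_pi (x := (θ - φ)/2) (by linarith) (by nlinarith [Real.pi_pos]),
    Real.cos_nonneg_of_mem_Icc (x := (θ + φ)/2) ⟨by nlinarith [Real.pi_pos], by linarith⟩]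

lemma sin_le_neg_aux {φ θ : ℝ} (h0 : 0 ≤ φ) (h1 : π + φ ≤ θ) (h2 : θ ≤ 2 * π - φ) :
    Real.sin θ ≤ -Real.sin φ := by
  have key : Real.sin θ + Real.sin φ = 2 * Real.sin ((θ + φ)/2) * Real.cos ((θ - φ)/2) := by
    have h := Real.sin_sub_sin θ (-φ)
    rw [Real.sin_neg, show θ - -φ = θ + φ by ring, show θ + -φ = θ - φ by ring] at h
    linarith
  nlinarith [Real.sin_nonneg_of_nonneg_of_le_pi (x := (θ + φ)/2) (by nlinarith [Real.pi_pos]) (by linarith),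
    Real.cos_nonpos_of_pi_div_two_le_of_le (x := (θ - φ)/2) (by linarith) (by nlinarith [Real.pi_pos])]

theorem quadrature_points_location (J : ℕ) (hJ : 2 ≤ J) (hJeven : Even J)
    (t ε ρ₂ : ℝ) (ht : 0 < t) (hε : 0 < ε) (hρ₂ : 0 ≤ ρ₂)
    (φ r : ℝ) (hφ : φ = Real.pi / J) (hr : r = (ρ₂ / 2 + ε) / Real.sin φ)
    (z : ℕ → ℂ)
    (hz : ∀ j : ℕ, z j =
      ((t * r * (Real.cos ((2 * (j : ℝ) - 1) * φ) - Real.cos φ) : ℝ) : ℂ)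
        + ((r * Real.sin ((2 * (j : ℝ) - 1) * φ) - ρ₂ / 2 : ℝ) : ℂ) * Complex.I) :
    ∀ j : ℕ, 1 ≤ j → j ≤ J →
      (z j).re ≤ 0 ∧ (ε ≤ (z j).im ∨ (z j).im ≤ -ρ₂ - ε) := by
  have hJ0 : (0:ℝ) < J := by positivity
  have hφpos : 0 < φ := by rw [hφ]; positivity
  have hφle : φ ≤ π / 2 := by
    rw [hφ]
    rw [div_le_div_iff₀ hJ0 two_pos]
    have h2 : (2:ℝ) ≤ J := by exact_mod_cast hJ
    nlinarith [Real.pi_pos]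
  have hsin : 0 < Real.sin φ := Real.sin_pos_of_pos_of_lt_pi hφpos
    (by linarith [Real.pi_pos])
  have hrpos : 0 < r := by rw [hr]; positivity
  have hrsin : r * Real.sin φ = ρ₂ / 2 + ε := by
    rw [hr]; field_simp
  have hJφ : (J : ℝ) * φ = π := by
    rw [hφ]; field_simp
  intro j hj1 hjJ
  set θ := (2 * (j : ℝ) - 1) * φ with hθ
  have hj1' : (1:ℝ) ≤ (j:ℝ) := by exact_mod_cast hj1
  have hjJ' : (j:ℝ) ≤ (J:ℝ) := by exact_mod_cast hjJ
  have hθlb : φ ≤ θ := by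
    have key : θ - φ = (2*(j:ℝ) - 2) * φ := by rw [hθ]; ring
    linarith [mul_nonneg (by linarith : (0:ℝ) ≤ 2*(j:ℝ) - 2) hφpos.le]
  have hθub : θ ≤ 2 * π - φ := by
    have key : (2 * π - φ) - θ = (2*(J:ℝ) - 2*(j:ℝ)) * φ := by rw [hθ, ← hJφ]; ring
    linarith [mul_nonneg (by linarith : (0:ℝ) ≤ 2*(J:ℝ) - 2*(j:ℝ)) hφpos.le]
  have hre : (z j).re = t * r * (Real.cos θ - Real.cos φ) := by
    rw [hz j]
    simp only [Complex.add_re, Complex.ofReal_re, Complex.mul_re, Complex.I_re,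
      Complex.ofReal_im, Complex.I_im, hθ]
    ring
  have him : (z j).im = r * Real.sin θ - ρ₂ / 2 := by
    rw [hz j]
    simp only [Complex.add_im, Complex.ofReal_im, Complex.mul_im, Complex.I_im,
      Complex.ofReal_re, Complex.I_re, hθ]
    ring
  constructor
  · rw [hre]
    have h1 := cos_le_cos_aux (le_of_lt hφpos) hθlb hθub
    nlinarith [mul_pos ht hrpos]
  · obtain ⟨m, hm⟩ := hJeven
    have hmJ : (J:ℝ) = 2 * m := by rw [hm]; push_cast; ring
    by_cases hcase : j ≤ m
    · left
      have hc' : (j:ℝ) ≤ (m:ℝ) := by exact_mod_cast hcase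
      have hθub2 : θ ≤ π - φ := by
        have key : (π - φ) - θ = (2*(m:ℝ) - 2*(j:ℝ)) * φ := by rw [hθ, ← hJφ, hmJ]; ring
        linarith [mul_nonneg (by linarith : (0:ℝ) ≤ 2*(m:ℝ) - 2*(j:ℝ)) hφpos.le]
      have hsle := sin_ge_sin_aux (le_of_lt hφpos) hθlb hθub2
      rw [him]
      nlinarith [mul_le_mul_of_nonneg_left hsle hrpos.le]
    · right
      push_neg at hcase
      have hc' : (m:ℝ) + 1 ≤ (j:ℝ) := by exact_mod_cast hcase
      have hθlb2 : π + φ ≤ θ := by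
        have key : θ - (π + φ) = (2*(j:ℝ) - 2*(m:ℝ) - 2) * φ := by rw [hθ, ← hJφ, hmJ]; ring
        linarith [mul_nonneg (by linarith : (0:ℝ) ≤ 2*(j:ℝ) - 2*(m:ℝ) - 2) hφpos.le]
      have hsle := sin_le_neg_aux (le_of_lt hφpos) hθlb2 hθub
      rw [him]
      nlinarith [mul_le_mul_of_nonneg_left hsle hrpos.le]
end
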